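/- For every fixed integer δ ≥ 0, Σ_{(δ1,δ2,δ3)} 6^{δ1} · 4^{δ2} · 2^{δ3} · S_{δ1}(d) · S_{δ2}(d) · S_{δ3}(d) = (4d³)^δ/δ! + O(d^{3δ−1}) as d → ∞, where the sum ranges over all ordered triples (δ1, δ2, δ3) of nonnegative integers with δ1 + δ2 + δ3 = δ. -/

import Mathlib

open Filter Asymptotics

/-- `S k d = Σ_{d ≥ i₁ ≥ i₂ ≥ ⋯ ≥ i_k ≥ 1} i₁² i₂² ⋯ i_k²`, evaluated in `ℝ`,
with `S 0 d = 1`. -/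
noncomputable def S : ℕ → ℕ → ℝ
  | 0, _ => 1
  | k + 1, d => ∑ i ∈ Finset.Icc 1 d, (i : ℝ) ^ 2 * S k i

/-!
Comparing with `∫₀ᵈ xᵐ dx` gives `Σ_{i ≤ d} iᵐ = d^(m+1)/(m+1) + O(dᵐ)`. Feeding this into the
recursion `S_{k+1}(d) = Σ_{i ≤ d} i² S_k(i)` shows inductively that
`S_k(d) = xᵏ/k! + O(d^(3k-1))` with `x = d³/3`. Hence each product `S_{δ1} S_{δ2} S_{δ3}` is the
product of the leading terms up to `O(d^(3δ-1))`, and by the trinomial theorem the weighted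
leading terms add up to `(6x + 4x + 2x)^δ/δ! = (4d³)^δ/δ!`.
-/

open Finset Nat

theorem abs_sum_Icc_pow_sub_le (m d : ℕ) :
    |∑ i ∈ Icc 1 d, (i : ℝ) ^ m - (d : ℝ) ^ (m + 1) / (m + 1)| ≤ (d : ℝ) ^ m := by
  have hmono : MonotoneOn (fun x : ℝ => x ^ m) (Set.Icc ((0 : ℕ) : ℝ) d) := fun x hx y _ hxy =>
    pow_le_pow_left₀ (by exact_mod_cast hx.1) hxy m
  have hint : ∫ x in ((0 : ℕ) : ℝ)..d, x ^ m = (d : ℝ) ^ (m + 1) / (m + 1) := by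
    simp [integral_pow]
  have hright : ∑ i ∈ Ico 0 d, ((i + 1 : ℕ) : ℝ) ^ m = ∑ i ∈ Icc 1 d, (i : ℝ) ^ m := by
    rw [sum_Ico_add' (fun i : ℕ => (i : ℝ) ^ m), Ico_add_one_right_eq_Icc]
  have hleft : ∑ i ∈ Icc 1 d, (i : ℝ) ^ m ≤ ∑ i ∈ Ico 0 d, (i : ℝ) ^ m + (d : ℝ) ^ m := by
    rw [← sum_Ico_succ_top (Nat.zero_le d), sum_eq_sum_Ico_succ_bot (Nat.succ_pos d)]
    simp only [zero_add, Nat.succ_eq_add_one, Ico_add_one_right_eq_Icc, Nat.cast_zero]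
    -- an inequality only because of the `i = 0` term `0 ^ m`, which is `1` when `m = 0`
    linarith [pow_nonneg (le_refl (0 : ℝ)) m]
  have hupper := hmono.integral_le_sum_Ico (Nat.zero_le d)
  have hlower := hmono.sum_le_integral_Ico (Nat.zero_le d)
  rw [hint] at hupper hlower
  rw [hright] at hupper
  rw [abs_le]
  constructor <;> linarith [pow_nonneg (Nat.cast_nonneg d : (0 : ℝ) ≤ d) m]

theorem add_pow_div_factorial {K : Type*} [Field K] [CharZero K] (x y : K) (n : ℕ) :
    (x + y) ^ n / n ! = ∑ m ∈ range (n + 1), x ^ m / m ! * (y ^ (n - m) / (n - m)!) := by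
  rw [add_pow, sum_div]
  refine sum_congr rfl fun m hm => ?_
  rw [Nat.cast_choose K (Nat.lt_succ_iff.mp (mem_range.mp hm))]
  have : (n ! : K) ≠ 0 := Nat.cast_ne_zero.mpr n.factorial_ne_zero
  field_simp

theorem add_add_pow_div_factorial {K : Type*} [Field K] [CharZero K] (x y z : K) (n : ℕ) :
    (x + y + z) ^ n / n ! = ∑ a ∈ range (n + 1), ∑ b ∈ range (n - a + 1),
      x ^ a / a ! * (y ^ b / b !) * (z ^ (n - a - b) / (n - a - b)!) := by
  rw [add_assoc, add_pow_div_factorial]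
  refine sum_congr rfl fun a _ => ?_
  rw [add_pow_div_factorial, mul_sum]
  simp only [mul_assoc, Nat.sub_sub]

noncomputable def mainTerm (k d : ℕ) : ℝ := ((d : ℝ) ^ 3 / 3) ^ k / k !

theorem S_succ_sub_mainTerm_succ (k d : ℕ) :
    S (k + 1) d - mainTerm (k + 1) d =
      ∑ i ∈ Icc 1 d, (i : ℝ) ^ 2 * (S k i - mainTerm k i) +
        (∑ i ∈ Icc 1 d, (i : ℝ) ^ (3 * k + 2) - (d : ℝ) ^ (3 * k + 2 + 1) / ((3 * k + 2 : ℕ) + 1)) /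
          (3 ^ k * k !) := by
  have hterm : ∀ i : ℕ, (i : ℝ) ^ 2 * mainTerm k i = (i : ℝ) ^ (3 * k + 2) / (3 ^ k * k !) := by
    intro i
    rw [mainTerm, div_pow, ← pow_mul]
    ring
  have hsucc : mainTerm (k + 1) d =
      (d : ℝ) ^ (3 * k + 2 + 1) / ((3 * k + 2 : ℕ) + 1) / (3 ^ k * k !) := by
    rw [mainTerm, div_pow, ← pow_mul, factorial_succ]
    push_cast
    field_simp
    ring
  simp only [S, hsucc, mul_sub, sum_sub_distrib, hterm, ← sum_div]
  ring

theorem abs_sum_Icc_sq_mul_le {e : ℕ → ℝ} {C : ℝ} {p : ℕ} (hC : 0 ≤ C)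
    (he : ∀ i, |e i| * i ≤ C * (i : ℝ) ^ p) (d : ℕ) :
    |∑ i ∈ Icc 1 d, (i : ℝ) ^ 2 * e i| ≤ C * (d : ℝ) ^ (p + 2) :=
  calc |∑ i ∈ Icc 1 d, (i : ℝ) ^ 2 * e i|
      ≤ ∑ i ∈ Icc 1 d, |(i : ℝ) ^ 2 * e i| := abs_sum_le_sum_abs _ _
    _ ≤ ∑ _i ∈ Icc 1 d, C * (d : ℝ) ^ (p + 1) := by
      refine sum_le_sum fun i hi => ?_
      have hid : (i : ℝ) ≤ d := by exact_mod_cast (mem_Icc.mp hi).2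
      calc |(i : ℝ) ^ 2 * e i| = i * (|e i| * i) := by
            rw [abs_mul, abs_of_nonneg (by positivity)]
            ring
        _ ≤ i * (C * (i : ℝ) ^ p) := mul_le_mul_of_nonneg_left (he i) (Nat.cast_nonneg i)
        _ = C * (i : ℝ) ^ (p + 1) := by ring
        _ ≤ C * (d : ℝ) ^ (p + 1) := by gcongr
    _ = C * (d : ℝ) ^ (p + 2) := by
      simp only [sum_const, Nat.card_Icc, nsmul_eq_mul]
      push_cast
      ring

theorem exists_abs_S_sub_mainTerm_mul_le (k : ℕ) :
    ∃ C, 0 ≤ C ∧ ∀ d : ℕ, |S k d - mainTerm k d| * d ≤ C * (d : ℝ) ^ (3 * k) := by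
  induction k with
  | zero => exact ⟨0, le_rfl, fun d => by simp [S, mainTerm]⟩
  | succ k ih =>
    obtain ⟨C, hC, hS⟩ := ih
    have hck : (0 : ℝ) < 3 ^ k * k ! := by positivity
    refine ⟨C + 1 / (3 ^ k * k !), by positivity, fun d => ?_⟩
    rw [S_succ_sub_mainTerm_succ]
    calc _ ≤ (C * (d : ℝ) ^ (3 * k + 2) + (d : ℝ) ^ (3 * k + 2) / (3 ^ k * k !)) * d := by
          gcongr
          refine (abs_add_le _ _).trans (add_le_add (abs_sum_Icc_sq_mul_le hC hS d) ?_)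
          rw [abs_div, abs_of_pos hck]
          gcongr
          exact abs_sum_Icc_pow_sub_le (3 * k + 2) d
      _ = (C + 1 / (3 ^ k * k !)) * (d : ℝ) ^ (3 * (k + 1)) := by ring

theorem natCast_zpow_sub_one_isBigO_pow (n : ℕ) :
    (fun d : ℕ => (d : ℝ) ^ ((n : ℤ) - 1)) =O[atTop] fun d : ℕ => (d : ℝ) ^ n := by
  refine IsBigO.of_bound' ?_
  filter_upwards [eventually_ge_atTop 1] with d hd
  have hd' : (1 : ℝ) ≤ d := by exact_mod_cast hd
  rw [Real.norm_of_nonneg (by positivity), Real.norm_of_nonneg (by positivity), ← zpow_natCast]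
  exact zpow_le_zpow_right₀ hd' (by omega)

theorem natCast_zpow_sub_one_mul_pow_eventuallyEq (m n : ℕ) :
    (fun d : ℕ => (d : ℝ) ^ ((m : ℤ) - 1) * (d : ℝ) ^ n) =ᶠ[atTop]
      fun d : ℕ => (d : ℝ) ^ (((m + n : ℕ) : ℤ) - 1) := by
  filter_upwards [eventually_ge_atTop 1] with d hd
  have hd' : (d : ℝ) ≠ 0 := by positivity
  rw [← zpow_natCast, ← zpow_add₀ hd']
  push_cast
  ring_nf

theorem isBigO_mul_sub_mul {f₁ g₁ f₂ g₂ : ℕ → ℝ} {m n : ℕ}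
    (hg₁ : g₁ =O[atTop] fun d : ℕ => (d : ℝ) ^ m)
    (h₁ : (f₁ - g₁) =O[atTop] fun d : ℕ => (d : ℝ) ^ ((m : ℤ) - 1))
    (hg₂ : g₂ =O[atTop] fun d : ℕ => (d : ℝ) ^ n)
    (h₂ : (f₂ - g₂) =O[atTop] fun d : ℕ => (d : ℝ) ^ ((n : ℤ) - 1)) :
    (f₁ * f₂ - g₁ * g₂) =O[atTop] fun d : ℕ => (d : ℝ) ^ (((m + n : ℕ) : ℤ) - 1) := by
  have hf₂ : f₂ =O[atTop] fun d : ℕ => (d : ℝ) ^ n := by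
    simpa using (h₂.trans (natCast_zpow_sub_one_isBigO_pow n)).add hg₂
  have hcomm : (fun d : ℕ => (d : ℝ) ^ m * (d : ℝ) ^ ((n : ℤ) - 1)) =ᶠ[atTop]
      fun d : ℕ => (d : ℝ) ^ (((m + n : ℕ) : ℤ) - 1) := by
    simpa only [mul_comm, add_comm m n] using natCast_zpow_sub_one_mul_pow_eventuallyEq n m
  rw [show f₁ * f₂ - g₁ * g₂ = (f₁ - g₁) * f₂ + g₁ * (f₂ - g₂) by ring]
  exact ((h₁.mul hf₂).trans_eventuallyEq (natCast_zpow_sub_one_mul_pow_eventuallyEq m n)).add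
    ((hg₁.mul h₂).trans_eventuallyEq hcomm)

theorem mainTerm_isBigO (k : ℕ) : mainTerm k =O[atTop] fun d : ℕ => (d : ℝ) ^ (3 * k) := by
  have h : mainTerm k = fun d : ℕ => (3 ^ k * k ! : ℝ)⁻¹ * (d : ℝ) ^ (3 * k) := by
    ext d
    rw [mainTerm, div_pow, pow_mul]
    ring
  rw [h]
  exact (isBigO_refl _ _).const_mul_left _

theorem S_sub_mainTerm_isBigO (k : ℕ) :
    (S k - mainTerm k) =O[atTop] fun d : ℕ => (d : ℝ) ^ (((3 * k : ℕ) : ℤ) - 1) := by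
  obtain ⟨C, -, hC⟩ := exists_abs_S_sub_mainTerm_mul_le k
  refine IsBigO.of_bound C ?_
  filter_upwards [eventually_ge_atTop 1] with d hd
  have hd' : (0 : ℝ) < d := by exact_mod_cast hd
  rw [Pi.sub_apply, Real.norm_eq_abs, Real.norm_of_nonneg (by positivity), zpow_sub_one₀ hd'.ne',
    zpow_natCast, ← div_eq_mul_inv, ← mul_div_assoc, le_div_iff₀ hd']
  exact hC d

theorem S_mul_S_mul_S_sub_isBigO (a b c : ℕ) :
    (S a * S b * S c - mainTerm a * mainTerm b * mainTerm c) =O[atTop]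
      fun d : ℕ => (d : ℝ) ^ (((3 * (a + b + c) : ℕ) : ℤ) - 1) := by
  have hab := isBigO_mul_sub_mul (mainTerm_isBigO a) (S_sub_mainTerm_isBigO a)
    (mainTerm_isBigO b) (S_sub_mainTerm_isBigO b)
  have hmain_ab : (mainTerm a * mainTerm b) =O[atTop] fun d : ℕ => (d : ℝ) ^ (3 * a + 3 * b) := by
    have h := (mainTerm_isBigO a).mul (mainTerm_isBigO b)
    simp only [← pow_add] at h
    exact h
  have habc := isBigO_mul_sub_mul hmain_ab hab (mainTerm_isBigO c) (S_sub_mainTerm_isBigO c)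
  rwa [show 3 * a + 3 * b + 3 * c = 3 * (a + b + c) by ring] at habc

theorem sum_mainTerm_eq (δ d : ℕ) :
    ∑ a ∈ range (δ + 1), ∑ b ∈ range (δ - a + 1),
        (6 : ℝ) ^ a * 4 ^ b * 2 ^ (δ - a - b) *
          (mainTerm a d * mainTerm b d * mainTerm (δ - a - b) d) =
      (4 * (d : ℝ) ^ 3) ^ δ / δ ! := by
  rw [show 4 * (d : ℝ) ^ 3 = 6 * (d ^ 3 / 3) + 4 * (d ^ 3 / 3) + 2 * (d ^ 3 / 3) by ring,
    add_add_pow_div_factorial]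
  refine sum_congr rfl fun a _ => sum_congr rfl fun b _ => ?_
  simp only [mainTerm, mul_pow]
  ring

/-- For fixed `δ ≥ 0`, summing over all ordered triples `(δ1, δ2, δ3)` of nonnegative
integers with `δ1 + δ2 + δ3 = δ`,
`Σ 6^{δ1} 4^{δ2} 2^{δ3} S_{δ1}(d) S_{δ2}(d) S_{δ3}(d) = (4d³)^δ/δ! + O(d^{3δ−1})`. -/
theorem stmt3 (δ : ℕ) :
    (fun d : ℕ =>
        (∑ δ1 ∈ Finset.range (δ + 1), ∑ δ2 ∈ Finset.range (δ - δ1 + 1),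
          (6 : ℝ) ^ δ1 * 4 ^ δ2 * 2 ^ (δ - δ1 - δ2) *
            S δ1 d * S δ2 d * S (δ - δ1 - δ2) d)
        - (4 * (d : ℝ) ^ 3) ^ δ / (Nat.factorial δ)) =O[atTop]
      fun d : ℕ => (d : ℝ) ^ ((3 * δ : ℤ) - 1) := by
  have hterm : ∀ a ∈ range (δ + 1), ∀ b ∈ range (δ - a + 1),
      (fun d : ℕ => (6 : ℝ) ^ a * 4 ^ b * 2 ^ (δ - a - b) *
        (S a d * S b d * S (δ - a - b) d -
          mainTerm a d * mainTerm b d * mainTerm (δ - a - b) d)) =O[atTop]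
        fun d : ℕ => (d : ℝ) ^ ((3 * δ : ℤ) - 1) := by
    intro a ha b hb
    have hδ : 3 * (a + b + (δ - a - b)) = 3 * δ := by
      rw [mem_range] at ha hb
      omega
    have h := S_mul_S_mul_S_sub_isBigO a b (δ - a - b)
    rw [hδ, Nat.cast_mul, Nat.cast_ofNat] at h
    exact h.const_mul_left _
  refine (IsBigO.fun_sum fun a ha => IsBigO.fun_sum (hterm a ha)).congr_left fun d => ?_
  rw [← sum_mainTerm_eq δ d, ← sum_sub_distrib]
  refine sum_congr rfl fun a _ => ?_
  rw [← sum_sub_distrib]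
  refine sum_congr rfl fun b _ => ?_
  ring
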